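/- arXiv:2508.07370 — 2 statements merged into one kernel-verified Lean document; each statement's English description precedes it below -/
import Mathlib

section
/- Let n, m be positive integers and let f : ℝ^{n×m} → ℝ be continuously differentiable. Define ℓ(u, V, w) := f(diag(u) V diag(w)) for u ∈ ℝ^n, V ∈ ℝ^{n×m}, w ∈ ℝ^m. Suppose t ↦ (u(t), V(t), w(t)) is a differentiable curve on [0,T) following the gradient flow (u'(t), V'(t), w'(t)) = −∇ℓ(u(t), V(t), w(t)), and let Z(t) := diag(u(t)) V(t) diag(w(t)) and G(t) := ∇f(Z(t)) ∈ ℝ^{n×m} (the matrix of partial derivatives of f at Z(t)). Then at every time t such that u_i(t) ≠ 0 for all i and w_j(t) ≠ 0 for all j, one has Z'(t) = −ddiag(G Z^⊤) diag(u)^{-2} Z − diag(u)² G diag(w)² − Z diag(w)^{-2} ddiag(Z^⊤ G), where all quantities are evaluated at t, diag(v)^{±2} denotes the diagonal matrix with entries v_i^{±2}, and ddiag(M) denotes the diagonal matrix whose diagonal equals the diagonal of the square matrix M. -/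
open Matrix

attribute [local instance] Matrix.normedAddCommGroup Matrix.normedSpace

/-- The product `diag(u) V diag(w)` associated to the parameter vector
`θ = (u, V, w)` of a 3-layer network with scalar input and output. -/
noncomputable def threeLayerLift (n m : ℕ)
    (θ : EuclideanSpace ℝ (Fin n ⊕ (Fin n × Fin m) ⊕ Fin m)) :
    Matrix (Fin n) (Fin m) ℝ :=
  Matrix.diagonal (fun i => θ (Sum.inl i)) *
    Matrix.of (fun i j => θ (Sum.inr (Sum.inl (i, j)))) *
      Matrix.diagonal (fun j => θ (Sum.inr (Sum.inr j)))

/-- The right-hand side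
`−ddiag(G Zᵀ) diag(u)⁻² Z − diag(u)² G diag(w)² − Z diag(w)⁻² ddiag(Zᵀ G)`. -/
noncomputable def threeLayerRHS (n m : ℕ) (Z G : Matrix (Fin n) (Fin m) ℝ)
    (u : Fin n → ℝ) (w : Fin m → ℝ) : Matrix (Fin n) (Fin m) ℝ :=
  -(Matrix.diagonal (fun i => (G * Zᵀ) i i) * Matrix.diagonal (fun i => (u i ^ 2)⁻¹) * Z)
    - Matrix.diagonal (fun i => u i ^ 2) * G * Matrix.diagonal (fun j => w j ^ 2)
    - Z * Matrix.diagonal (fun j => (w j ^ 2)⁻¹) * Matrix.diagonal (fun j => (Zᵀ * G) j j)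

/-! Each entry of `Z = diag(u) V diag(w)` is the product `u i * V i j * w j`, so `Z'` follows
from the product rule once the three blocks of `∇ℓ` are known. By the chain rule they are
`∂ℓ/∂u i = ∑ b, V i b * w b * G i b`, `∂ℓ/∂V i j = u i * w j * G i j` and
`∂ℓ/∂w j = ∑ a, u a * V a j * G a j`. Dividing by `u i` (resp. `w j`) turns the two sums into
`(G Zᵀ) i i / u i` and `(Zᵀ G) j j / w j`, which gives the stated formula. -/

theorem EuclideanSpace.gradient_apply {ι : Type*} [Fintype ι] [DecidableEq ι]
    (g : EuclideanSpace ℝ ι → ℝ) (p : EuclideanSpace ℝ ι) (e : ι) :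
    gradient g p e = fderiv ℝ g p (EuclideanSpace.single e 1) := by
  rw [gradient, ← InnerProductSpace.toDual_symm_apply, EuclideanSpace.inner_single_right]
  simp

theorem Matrix.map_eq_sum_single {ι κ R M F : Type*} [Fintype ι] [Fintype κ] [DecidableEq ι]
    [DecidableEq κ] [Semiring R] [AddCommMonoid M] [Module R M] [FunLike F (Matrix ι κ R) M]
    [LinearMapClass F R (Matrix ι κ R) M] (φ : F) (A : Matrix ι κ R) :
    φ A = ∑ a, ∑ b, A a b • φ (single a b 1) := by
  conv_lhs => rw [matrix_eq_sum_single A]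
  simp only [map_sum, ← map_smul, smul_single, smul_eq_mul, mul_one]

local notation "ParamSpace" n:max m:max => EuclideanSpace ℝ (Fin n ⊕ (Fin n × Fin m) ⊕ Fin m)

section ThreeLayer

variable {n m : ℕ}

theorem threeLayerLift_apply (p : ParamSpace n m) (i : Fin n) (j : Fin m) :
    threeLayerLift n m p i j
      = p (.inl i) * p (.inr (.inl (i, j))) * p (.inr (.inr j)) := by
  simp [threeLayerLift, mul_diagonal, diagonal_mul]

noncomputable def threeLayerLiftDeriv (p : ParamSpace n m) :
    (ParamSpace n m) →L[ℝ] Matrix (Fin n) (Fin m) ℝ :=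
  ContinuousLinearMap.pi fun i => ContinuousLinearMap.pi fun j =>
    (p (.inr (.inl (i, j))) * p (.inr (.inr j))) • EuclideanSpace.proj (.inl i)
      + (p (.inl i) * p (.inr (.inr j))) • EuclideanSpace.proj (.inr (.inl (i, j)))
      + (p (.inl i) * p (.inr (.inl (i, j)))) • EuclideanSpace.proj (.inr (.inr j))

theorem threeLayerLiftDeriv_apply (p v : ParamSpace n m) (i : Fin n) (j : Fin m) :
    threeLayerLiftDeriv p v i j
      = p (.inr (.inl (i, j))) * p (.inr (.inr j)) * v (.inl i)
        + p (.inl i) * p (.inr (.inr j)) * v (.inr (.inl (i, j)))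
        + p (.inl i) * p (.inr (.inl (i, j))) * v (.inr (.inr j)) :=
  rfl

theorem hasFDerivAt_threeLayerLift (p : ParamSpace n m) :
    HasFDerivAt (threeLayerLift n m) (threeLayerLiftDeriv p) p := by
  refine hasFDerivAt_pi'.2 fun i => hasFDerivAt_pi'.2 fun j => ?_
  have hcoord (e : Fin n ⊕ (Fin n × Fin m) ⊕ Fin m) :=
    PiLp.hasFDerivAt_apply (𝕜 := ℝ) 2 p e
  have hprod := ((hcoord (.inl i)).mul (hcoord (.inr (.inl (i, j))))).mul (hcoord (.inr (.inr j)))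
  refine (hprod.congr_of_eventuallyEq (.of_forall fun q => threeLayerLift_apply q i j)).congr_fderiv
    ?_
  ext v
  change _ = threeLayerLiftDeriv p v i j
  simp only [Pi.mul_apply, smul_add, _root_.add_apply, _root_.smul_apply, PiLp.proj_apply,
    smul_eq_mul, threeLayerLiftDeriv_apply]
  ring

section Gradient

variable {f : Matrix (Fin n) (Fin m) ℝ → ℝ} {p : ParamSpace n m}

theorem gradient_comp_threeLayerLift_apply
    (hf : DifferentiableAt ℝ f (threeLayerLift n m p))
    (e : Fin n ⊕ (Fin n × Fin m) ⊕ Fin m) :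
    gradient (fun q => f (threeLayerLift n m q)) p e
      = ∑ a, ∑ b, threeLayerLiftDeriv p (EuclideanSpace.single e 1) a b
          * fderiv ℝ f (threeLayerLift n m p) (single a b 1) := by
  have hchain : HasFDerivAt (fun q => f (threeLayerLift n m q))
      ((fderiv ℝ f (threeLayerLift n m p)).comp (threeLayerLiftDeriv p)) p :=
    hf.hasFDerivAt.comp p (hasFDerivAt_threeLayerLift p)
  rw [EuclideanSpace.gradient_apply, hchain.fderiv, ContinuousLinearMap.comp_apply,
    Matrix.map_eq_sum_single]
  simp only [smul_eq_mul]

theorem gradient_comp_threeLayerLift_inl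
    (hf : DifferentiableAt ℝ f (threeLayerLift n m p)) (i : Fin n) :
    gradient (fun q => f (threeLayerLift n m q)) p (.inl i)
      = ∑ b, p (.inr (.inl (i, b))) * p (.inr (.inr b))
          * fderiv ℝ f (threeLayerLift n m p) (single i b 1) := by
  simp [gradient_comp_threeLayerLift_apply hf, threeLayerLiftDeriv_apply]

theorem gradient_comp_threeLayerLift_inr_inl
    (hf : DifferentiableAt ℝ f (threeLayerLift n m p)) (i : Fin n) (j : Fin m) :
    gradient (fun q => f (threeLayerLift n m q)) p (.inr (.inl (i, j)))
      = p (.inl i) * p (.inr (.inr j)) * fderiv ℝ f (threeLayerLift n m p) (single i j 1) := by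
  simp [gradient_comp_threeLayerLift_apply hf, threeLayerLiftDeriv_apply, ite_and]

theorem gradient_comp_threeLayerLift_inr_inr
    (hf : DifferentiableAt ℝ f (threeLayerLift n m p)) (j : Fin m) :
    gradient (fun q => f (threeLayerLift n m q)) p (.inr (.inr j))
      = ∑ a, p (.inl a) * p (.inr (.inl (a, j)))
          * fderiv ℝ f (threeLayerLift n m p) (single a j 1) := by
  simp [gradient_comp_threeLayerLift_apply hf, threeLayerLiftDeriv_apply]

end Gradient

/- The right-hand side is the product rule `(u' * V + u * V') * w + u * V * w'` evaluated at the
gradient-flow velocities, in the shape produced by `HasDerivWithinAt.mul`. -/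
theorem threeLayerRHS_apply_of_apply_eq {Z : Matrix (Fin n) (Fin m) ℝ} {u : Fin n → ℝ}
    {V : Matrix (Fin n) (Fin m) ℝ} {w : Fin m → ℝ} (hZ : ∀ a b, Z a b = u a * V a b * w b)
    (G : Matrix (Fin n) (Fin m) ℝ) {i : Fin n} {j : Fin m} (hu : u i ≠ 0) (hw : w j ≠ 0) :
    threeLayerRHS n m Z G u w i j
      = (-(∑ b, V i b * w b * G i b) * V i j + u i * -(u i * w j * G i j)) * w j
          + u i * V i j * -(∑ a, u a * V a j * G a j) := by
  simp only [threeLayerRHS, Matrix.sub_apply, Matrix.neg_apply, mul_diagonal, diagonal_mul,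
    diagonal_mul_diagonal]
  simp only [mul_apply, transpose_apply, hZ]
  have hrow : ∑ b, G i b * (u i * V i b * w b) = u i * ∑ b, V i b * w b * G i b := by
    rw [Finset.mul_sum]; exact Finset.sum_congr rfl fun b _ => by ring
  have hcol : ∑ a, u a * V a j * w j * G a j = w j * ∑ a, u a * V a j * G a j := by
    rw [Finset.mul_sum]; exact Finset.sum_congr rfl fun a _ => by ring
  rw [hrow, hcol]
  field_simp
  ring

end ThreeLayer

theorem threeLayer_intrinsic_dynamics_general
    (n m : ℕ)
    (f : Matrix (Fin n) (Fin m) ℝ → ℝ) (hf : ContDiff ℝ 1 f)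
    (T : ℝ)
    (θ : ℝ → EuclideanSpace ℝ (Fin n ⊕ (Fin n × Fin m) ⊕ Fin m))
    (hflow : ∀ t ∈ Set.Ico (0 : ℝ) T,
      HasDerivWithinAt θ
        (-(gradient (fun p => f (threeLayerLift n m p)) (θ t)))
        (Set.Ico (0 : ℝ) T) t) :
    ∀ t ∈ Set.Ico (0 : ℝ) T,
      (∀ i : Fin n, θ t (Sum.inl i) ≠ 0) →
      (∀ j : Fin m, θ t (Sum.inr (Sum.inr j)) ≠ 0) →
      ∀ (i : Fin n) (j : Fin m),
        HasDerivWithinAt (fun s => threeLayerLift n m (θ s) i j)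
          (threeLayerRHS n m (threeLayerLift n m (θ t))
            (Matrix.of fun a b =>
              fderiv ℝ f (threeLayerLift n m (θ t)) (Matrix.single a b 1))
            (fun i => θ t (Sum.inl i)) (fun j => θ t (Sum.inr (Sum.inr j))) i j)
          (Set.Ico (0 : ℝ) T) t := by
  intro t ht hu hw i j
  have hdiff : DifferentiableAt ℝ f (threeLayerLift n m (θ t)) :=
    hf.differentiable one_ne_zero _
  have hcoord (e : Fin n ⊕ (Fin n × Fin m) ⊕ Fin m) :
      HasDerivWithinAt (fun s => θ s e)
        (-(gradient (fun q => f (threeLayerLift n m q)) (θ t) e)) (Set.Ico 0 T) t :=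
    (PiLp.hasFDerivAt_apply 2 (θ t) e).comp_hasDerivWithinAt t (hflow t ht)
  have hprod := ((hcoord (.inl i)).mul (hcoord (.inr (.inl (i, j))))).mul
    (hcoord (.inr (.inr j)))
  rw [gradient_comp_threeLayerLift_inl hdiff, gradient_comp_threeLayerLift_inr_inl hdiff,
    gradient_comp_threeLayerLift_inr_inr hdiff] at hprod
  rw [threeLayerRHS_apply_of_apply_eq (threeLayerLift_apply (θ t)) _ (hu i) (hw j),
    funext fun s => threeLayerLift_apply (θ s) i j]
  exact hprod

/-- Along the gradient flow of `ℓ(u,V,w) = f(diag(u) V diag(w))`,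
whenever all entries of `u(t)` and `w(t)` are nonzero, the lifted matrix
`Z(t) = diag(u(t)) V(t) diag(w(t))` satisfies (entrywise)
`Z' = −ddiag(G Zᵀ) diag(u)⁻² Z − diag(u)² G diag(w)² − Z diag(w)⁻² ddiag(Zᵀ G)`,
where `G = ∇f(Z)` is the matrix of partial derivatives of `f` at `Z`. -/
theorem threeLayer_intrinsic_dynamics
    (n m : ℕ) (hn : 0 < n) (hm : 0 < m)
    (f : Matrix (Fin n) (Fin m) ℝ → ℝ) (hf : ContDiff ℝ 1 f)
    (T : ℝ) (hT : 0 < T)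
    (θ : ℝ → EuclideanSpace ℝ (Fin n ⊕ (Fin n × Fin m) ⊕ Fin m))
    (hflow : ∀ t ∈ Set.Ico (0 : ℝ) T,
      HasDerivWithinAt θ
        (-(gradient (fun p => f (threeLayerLift n m p)) (θ t)))
        (Set.Ico (0 : ℝ) T) t) :
    ∀ t ∈ Set.Ico (0 : ℝ) T,
      (∀ i : Fin n, θ t (Sum.inl i) ≠ 0) →
      (∀ j : Fin m, θ t (Sum.inr (Sum.inr j)) ≠ 0) →
      ∀ (i : Fin n) (j : Fin m),
        HasDerivWithinAt (fun s => threeLayerLift n m (θ s) i j)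
          (threeLayerRHS n m (threeLayerLift n m (θ t))
            (Matrix.of fun a b =>
              fderiv ℝ f (threeLayerLift n m (θ t)) (Matrix.single a b 1))
            (fun i => θ t (Sum.inl i)) (fun j => θ t (Sum.inr (Sum.inr j))) i j)
          (Set.Ico (0 : ℝ) T) t :=
  threeLayer_intrinsic_dynamics_general n m f hf T θ hflow
end

section
/- Let r ≥ 1, let f : ℝ → ℝ be twice continuously differentiable, and define ℓ(u, v) := f(⟨u, v⟩) for u, v ∈ ℝ^r, where ⟨·,·⟩ is the Euclidean inner product. Suppose t ↦ (u(t), v(t)) is a differentiable curve on [0,T) following the gradient flow (u'(t), v'(t)) = −∇ℓ(u(t), v(t)), and set S := u(0) u(0)^⊤ − v(0) v(0)^⊤ ∈ ℝ^{r×r} and z(t) := ⟨u(t), v(t)⟩. Then for all t ∈ [0,T): z'(t) = −√(2 tr(S²) − tr(S)² + 4 z(t)²) · f'(z(t)); in particular 2 tr(S²) − tr(S)² + 4 z(t)² = (‖u(t)‖² + ‖v(t)‖²)² ≥ 0 along the trajectory. -/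
open Matrix

/-!
Along the flow `u' = -c v`, `v' = -c u` one has `⟪u, v⟫' = -c (‖u‖² + ‖v‖²)` and
`(‖u‖² + ‖v‖²)' = -4 c ⟪u, v⟫`, so `(‖u‖² + ‖v‖²)² - 4 ⟪u, v⟫²` is conserved. At time `0` this
quantity equals `2 tr(S²) - tr(S)²`, because `tr S = ‖u‖² - ‖v‖²` and
`tr(S²) = ‖u‖⁴ + ‖v‖⁴ - 2 ⟪u, v⟫²` for `S = u uᵀ - v vᵀ`. Taking the square root of the
conserved quantity expresses `‖u‖² + ‖v‖²` through `z = ⟪u, v⟫`.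
-/

theorem Convex.eq_of_hasDerivWithinAt_zero {G : Type*} [NormedAddCommGroup G] [NormedSpace ℝ G]
    {f : ℝ → G} {s : Set ℝ} (hs : Convex ℝ s) (hf : ∀ x ∈ s, HasDerivWithinAt f 0 s x)
    {x y : ℝ} (hx : x ∈ s) (hy : y ∈ s) : f y = f x := by
  have h := hs.norm_image_sub_le_of_norm_hasDerivWithin_le hf (fun _ _ => norm_zero.le) hx hy
  rw [zero_mul, norm_le_zero_iff, sub_eq_zero] at h
  exact h

theorem two_mul_trace_sq_sub_trace_sq_vecMulVec_sub {ι R : Type*} [Fintype ι] [CommRing R]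
    (a b : ι → R) :
    2 * ((vecMulVec a a - vecMulVec b b) * (vecMulVec a a - vecMulVec b b)).trace -
        (vecMulVec a a - vecMulVec b b).trace ^ 2 =
      (a ⬝ᵥ a + b ⬝ᵥ b) ^ 2 - 4 * (a ⬝ᵥ b) ^ 2 := by
  simp only [sub_mul, mul_sub, vecMulVec_mul_vecMulVec, trace_sub, trace_vecMulVec,
    dotProduct_smul, smul_eq_mul, dotProduct_comm b a]
  ring

theorem EuclideanSpace.two_mul_trace_sq_sub_trace_sq_vecMulVec_sub {ι : Type*} [Fintype ι]
    (x y : EuclideanSpace ℝ ι) :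
    2 * ((vecMulVec x x - vecMulVec y y) * (vecMulVec x x - vecMulVec y y)).trace -
        (vecMulVec x x - vecMulVec y y).trace ^ 2 =
      (‖x‖ ^ 2 + ‖y‖ ^ 2) ^ 2 - 4 * inner ℝ x y ^ 2 := by
  have hdot : ∀ a b : EuclideanSpace ℝ ι, (a : ι → ℝ) ⬝ᵥ b = inner ℝ a b := fun a b => by
    rw [EuclideanSpace.inner_eq_star_dotProduct, dotProduct_comm]; rfl
  rw [_root_.two_mul_trace_sq_sub_trace_sq_vecMulVec_sub, hdot, hdot, hdot,
    real_inner_self_eq_norm_sq, real_inner_self_eq_norm_sq]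

section GradientFlow

variable {E : Type*} [NormedAddCommGroup E] [InnerProductSpace ℝ E]
  {u v : ℝ → E} {c : ℝ} {s : Set ℝ} {t : ℝ}

theorem hasDerivWithinAt_inner_of_flow (hu : HasDerivWithinAt u (-c • v t) s t)
    (hv : HasDerivWithinAt v (-c • u t) s t) :
    HasDerivWithinAt (fun w => inner ℝ (u w) (v w))
      (-c * (‖u t‖ ^ 2 + ‖v t‖ ^ 2)) s t := by
  refine (hu.inner ℝ hv).congr_deriv ?_
  rw [real_inner_smul_left, real_inner_smul_right, real_inner_self_eq_norm_sq,
    real_inner_self_eq_norm_sq]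
  ring

theorem hasDerivWithinAt_norm_sq_add_norm_sq_of_flow (hu : HasDerivWithinAt u (-c • v t) s t)
    (hv : HasDerivWithinAt v (-c • u t) s t) :
    HasDerivWithinAt (fun w => ‖u w‖ ^ 2 + ‖v w‖ ^ 2) (-4 * c * inner ℝ (u t) (v t)) s t := by
  simp only [← real_inner_self_eq_norm_sq]
  refine ((hu.inner ℝ hu).add (hv.inner ℝ hv)).congr_deriv ?_
  simp only [real_inner_smul_left, real_inner_smul_right, real_inner_comm (u t) (v t)]
  ring

theorem hasDerivWithinAt_flow_invariant (hu : HasDerivWithinAt u (-c • v t) s t)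
    (hv : HasDerivWithinAt v (-c • u t) s t) :
    HasDerivWithinAt (fun w => (‖u w‖ ^ 2 + ‖v w‖ ^ 2) ^ 2 - 4 * inner ℝ (u w) (v w) ^ 2)
      0 s t := by
  refine (((hasDerivWithinAt_norm_sq_add_norm_sq_of_flow hu hv).pow 2).sub
    (((hasDerivWithinAt_inner_of_flow hu hv).pow 2).const_mul 4)).congr_deriv ?_
  push_cast
  ring

end GradientFlow

theorem scalar_two_layer_intrinsic_dynamics_general
    (r : ℕ)
    (f : ℝ → ℝ)
    (T : ℝ)
    (u v : ℝ → EuclideanSpace ℝ (Fin r))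
    (hu : ∀ t ∈ Set.Ico (0 : ℝ) T,
      HasDerivWithinAt u (-(deriv f (inner ℝ (u t) (v t) : ℝ)) • v t) (Set.Ico (0 : ℝ) T) t)
    (hv : ∀ t ∈ Set.Ico (0 : ℝ) T,
      HasDerivWithinAt v (-(deriv f (inner ℝ (u t) (v t) : ℝ)) • u t) (Set.Ico (0 : ℝ) T) t) :
    ∀ t ∈ Set.Ico (0 : ℝ) T,
      (HasDerivWithinAt (fun s => (inner ℝ (u s) (v s) : ℝ))
        (-Real.sqrt
            (2 * ((vecMulVec (u 0) (u 0) - vecMulVec (v 0) (v 0)) *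
                (vecMulVec (u 0) (u 0) - vecMulVec (v 0) (v 0))).trace -
              ((vecMulVec (u 0) (u 0) - vecMulVec (v 0) (v 0)).trace) ^ 2 +
              4 * (inner ℝ (u t) (v t) : ℝ) ^ 2) *
          deriv f (inner ℝ (u t) (v t) : ℝ))
        (Set.Ico (0 : ℝ) T) t) ∧
      2 * ((vecMulVec (u 0) (u 0) - vecMulVec (v 0) (v 0)) *
            (vecMulVec (u 0) (u 0) - vecMulVec (v 0) (v 0))).trace -
          ((vecMulVec (u 0) (u 0) - vecMulVec (v 0) (v 0)).trace) ^ 2 +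
          4 * (inner ℝ (u t) (v t) : ℝ) ^ 2 =
        (‖u t‖ ^ 2 + ‖v t‖ ^ 2) ^ 2 := by
  intro t ht
  have h0 : (0 : ℝ) ∈ Set.Ico 0 T := ⟨le_rfl, ht.1.trans_lt ht.2⟩
  have hconserved := (convex_Ico 0 T).eq_of_hasDerivWithinAt_zero
    (fun w hw => hasDerivWithinAt_flow_invariant (hu w hw) (hv w hw)) h0 ht
  have hkey : 2 * ((vecMulVec (u 0) (u 0) - vecMulVec (v 0) (v 0)) *
        (vecMulVec (u 0) (u 0) - vecMulVec (v 0) (v 0))).trace -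
      ((vecMulVec (u 0) (u 0) - vecMulVec (v 0) (v 0)).trace) ^ 2 +
      4 * (inner ℝ (u t) (v t) : ℝ) ^ 2 = (‖u t‖ ^ 2 + ‖v t‖ ^ 2) ^ 2 := by
    rw [EuclideanSpace.two_mul_trace_sq_sub_trace_sq_vecMulVec_sub]
    linarith
  refine ⟨?_, hkey⟩
  rw [hkey, Real.sqrt_sq (by positivity)]
  exact (hasDerivWithinAt_inner_of_flow (hu t ht) (hv t ht)).congr_deriv (by ring)

/-- For the two-layer scalar linear network `ℓ(u,v) = f(⟨u,v⟩)`, along the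
gradient flow (`u' = −f'(⟨u,v⟩) v`, `v' = −f'(⟨u,v⟩) u`), setting
`S := u(0) u(0)ᵀ − v(0) v(0)ᵀ` and `z := ⟨u,v⟩`, one has
`z' = −√(2 tr(S²) − tr(S)² + 4 z²) · f'(z)`, and
`2 tr(S²) − tr(S)² + 4 z² = (‖u‖² + ‖v‖²)² ≥ 0` along the trajectory. -/
theorem scalar_two_layer_intrinsic_dynamics
    (r : ℕ) (hr : 1 ≤ r)
    (f : ℝ → ℝ) (hf : ContDiff ℝ 2 f)
    (T : ℝ) (hT : 0 < T)
    (u v : ℝ → EuclideanSpace ℝ (Fin r))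
    (hu : ∀ t ∈ Set.Ico (0 : ℝ) T,
      HasDerivWithinAt u (-(deriv f (inner ℝ (u t) (v t) : ℝ)) • v t) (Set.Ico (0 : ℝ) T) t)
    (hv : ∀ t ∈ Set.Ico (0 : ℝ) T,
      HasDerivWithinAt v (-(deriv f (inner ℝ (u t) (v t) : ℝ)) • u t) (Set.Ico (0 : ℝ) T) t) :
    ∀ t ∈ Set.Ico (0 : ℝ) T,
      (HasDerivWithinAt (fun s => (inner ℝ (u s) (v s) : ℝ))
        (-Real.sqrt
            (2 * ((vecMulVec (u 0) (u 0) - vecMulVec (v 0) (v 0)) *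
                (vecMulVec (u 0) (u 0) - vecMulVec (v 0) (v 0))).trace -
              ((vecMulVec (u 0) (u 0) - vecMulVec (v 0) (v 0)).trace) ^ 2 +
              4 * (inner ℝ (u t) (v t) : ℝ) ^ 2) *
          deriv f (inner ℝ (u t) (v t) : ℝ))
        (Set.Ico (0 : ℝ) T) t) ∧
      2 * ((vecMulVec (u 0) (u 0) - vecMulVec (v 0) (v 0)) *
            (vecMulVec (u 0) (u 0) - vecMulVec (v 0) (v 0))).trace -
          ((vecMulVec (u 0) (u 0) - vecMulVec (v 0) (v 0)).trace) ^ 2 +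
          4 * (inner ℝ (u t) (v t) : ℝ) ^ 2 =
        (‖u t‖ ^ 2 + ‖v t‖ ^ 2) ^ 2 :=
  scalar_two_layer_intrinsic_dynamics_general r f T u v hu hv
end
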